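/- Let G be a DAG with topological ordering ord, and let u, v be vertices with ord(v) < ord(u) and no directed path from v to u in G. Then the number of ordered pairs (a,d) of vertices with a ⇝ u in G, v ⇝ d in G, and ord(d) ≤ ord(a) is at most the number of ordered pairs (x,y) of vertices such that x ⇝ y holds in G+(u,v) but x ⇝ y does not hold in G. -/

import Mathlib

/-- Reachability: a directed path (possibly of length 0) from `x` to `y`. -/
def Reach {V : Type*} (E : V → V → Prop) : V → V → Prop :=
  Relation.ReflTransGen E

/-- A digraph is acyclic if it has no directed cycle. -/
def Acyclic {V : Type*} (E : V → V → Prop) : Prop :=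
  ∀ x, ¬ Relation.TransGen E x x

/-- `ord` is a topological ordering of the digraph `E`. -/
def IsTopOrd {V : Type*} {n : ℕ} (E : V → V → Prop) (ord : V ≃ Fin n) : Prop :=
  ∀ a b, E a b → ord a < ord b

/-- The graph `G + (u,v)`: the edge `(u,v)` is added to `E`. -/
def AddEdge {V : Type*} (E : V → V → Prop) (u v : V) : V → V → Prop :=
  fun a b => E a b ∨ (a = u ∧ b = v)

/-- `A = {x : ord v ≤ ord x ≤ ord u and x ⇝ u}`. -/
def AncS {V : Type*} {n : ℕ} (E : V → V → Prop) (ord : V ≃ Fin n) (u v : V) : Set V :=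
  {x | ord v ≤ ord x ∧ ord x ≤ ord u ∧ Reach E x u}

/-- `D = {x : ord v ≤ ord x ≤ ord u and v ⇝ x}`. -/
def DesS {V : Type*} {n : ℕ} (E : V → V → Prop) (ord : V ≃ Fin n) (u v : V) : Set V :=
  {x | ord v ≤ ord x ∧ ord x ≤ ord u ∧ Reach E v x}

/-- `ord'` is a canonical reordering for `ord, u, v`: conditions (a)-(d). -/
def IsCanonical {V : Type*} {n : ℕ} (E : V → V → Prop) (ord ord' : V ≃ Fin n)
    (u v : V) : Prop :=
  (∀ x, x ∉ AncS E ord u v ∪ DesS E ord u v → ord' x = ord x) ∧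
  (⇑ord' '' (AncS E ord u v ∪ DesS E ord u v) =
    ⇑ord '' (AncS E ord u v ∪ DesS E ord u v)) ∧
  (∀ x y, (x ∈ AncS E ord u v ∧ y ∈ AncS E ord u v) ∨
          (x ∈ DesS E ord u v ∧ y ∈ DesS E ord u v) →
      (ord' x < ord' y ↔ ord x < ord y)) ∧
  (∀ x ∈ AncS E ord u v, ∀ y ∈ DesS E ord u v, ord' x < ord' y)

theorem IsTopOrd.le_of_reach {V : Type*} {n : ℕ} {E : V → V → Prop} {ord : V ≃ Fin n}
    (htop : IsTopOrd E ord) {x y : V} (h : Reach E x y) : ord x ≤ ord y := by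
  induction h with
  | refl => exact le_rfl
  | tail _ hbc ih => exact ih.trans (htop _ _ hbc).le

theorem Reach.addEdge {V : Type*} {E : V → V → Prop} {x y : V} (u v : V) (h : Reach E x y) :
    Reach (AddEdge E u v) x y :=
  Relation.ReflTransGen.mono (fun _ _ => Or.inl) _ _ h

theorem reach_addEdge_of_reach_of_reach {V : Type*} {E : V → V → Prop} {u v x y : V}
    (hxu : Reach E x u) (hvy : Reach E v y) : Reach (AddEdge E u v) x y :=
  (hxu.addEdge u v).trans <|
    Relation.ReflTransGen.head (Or.inr ⟨rfl, rfl⟩) (hvy.addEdge u v)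

/-- A path `a ⇝ d` against the order would force `a = d`, closing a path `v ⇝ d = a ⇝ u`. -/
theorem not_reach_of_ord_le {V : Type*} {n : ℕ} {E : V → V → Prop} {ord : V ≃ Fin n}
    (htop : IsTopOrd E ord) {u v a d : V} (hnr : ¬ Reach E v u)
    (hau : Reach E a u) (hvd : Reach E v d) (hda : ord d ≤ ord a) : ¬ Reach E a d := by
  intro had
  have had_eq : a = d := ord.injective ((htop.le_of_reach had).antisymm hda)
  exact hnr (Relation.ReflTransGen.trans hvd (had_eq ▸ hau))

theorem count_newly_comparable_pairs_general {V : Type*} {n : ℕ}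
    (E : V → V → Prop)
    (ord : V ≃ Fin n) (htop : IsTopOrd E ord)
    (u v : V) (hnr : ¬ Reach E v u) :
    {p : V × V | Reach E p.1 u ∧ Reach E v p.2 ∧ ord p.2 ≤ ord p.1}.ncard ≤
    {p : V × V | Reach (AddEdge E u v) p.1 p.2 ∧ ¬ Reach E p.1 p.2}.ncard := by
  have : Finite V := Finite.of_equiv _ ord.symm
  refine Set.ncard_le_ncard ?_ (Set.toFinite _)
  rintro ⟨a, d⟩ ⟨hau, hvd, hda⟩
  exact ⟨reach_addEdge_of_reach_of_reach hau hvd, not_reach_of_ord_le htop hnr hau hvd hda⟩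

/-- the number of pairs (ancestor of `u`, descendant of `v`) with
`ord d ≤ ord a` is at most the number of pairs that become comparable upon
inserting `(u,v)`. -/
theorem count_newly_comparable_pairs {V : Type*} [Fintype V] {n : ℕ}
    (E : V → V → Prop) (hacyc : Acyclic E)
    (ord : V ≃ Fin n) (htop : IsTopOrd E ord)
    (u v : V) (huv : ord v < ord u) (hnr : ¬ Reach E v u) :
    {p : V × V | Reach E p.1 u ∧ Reach E v p.2 ∧ ord p.2 ≤ ord p.1}.ncard ≤
    {p : V × V | Reach (AddEdge E u v) p.1 p.2 ∧ ¬ Reach E p.1 p.2}.ncard :=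
  count_newly_comparable_pairs_general E ord htop u v hnr
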